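/- arXiv:1605.02291 — 2 statements merged into one kernel-verified Lean document; each statement's English description precedes it below -/
import Mathlib

section
/- For every natural number n ≥ 1, the domination polynomial of the graph H_{2n+1} satisfies D(H_{2n+1}, x) = (x³ + 3x² + x)(x⁴ + 4x³ + 6x² + 2x)^n. -/
open Polynomial

variable {V W : Type*}

/-- `S` is a dominating set of `G`. -/
def Dominates (G : SimpleGraph V) (S : Finset V) : Prop :=
  ∀ v, v ∉ S → ∃ u ∈ S, G.Adj u v

open Classical in
/-- The domination polynomial of a finite simple graph. -/
noncomputable def domPoly [Fintype V] (G : SimpleGraph V) : Polynomial ℤ :=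
  ∑ S : Finset V, if Dominates G S then (X : Polynomial ℤ) ^ S.card else 0

/-- Stevanović's clique cover construction `C{G}`. -/
def cliqueCoverConstruction (G : SimpleGraph V) {k : ℕ} (C : Fin k → Finset V) :
    SimpleGraph (V ⊕ Fin k × Fin 2) where
  Adj x y :=
    match x, y with
    | Sum.inl a, Sum.inl b => G.Adj a b
    | Sum.inl a, Sum.inr (i, _) => a ∈ C i
    | Sum.inr (i, _), Sum.inl a => a ∈ C i
    | Sum.inr _, Sum.inr _ => False
  symm := by
    constructor
    rintro (a | ⟨i, t⟩) (b | ⟨j, s⟩) h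
    · exact G.adj_symm h
    · exact h
    · exact h
    · exact h.elim
  loopless := by
    constructor
    rintro (a | ⟨i, t⟩) h
    · exact G.irrefl h
    · exact h

/-- clique cover of the odd path -/
def oddCover (n : ℕ) : Fin (n + 1) → Finset (Fin (2 * n + 1)) :=
  fun i =>
    if i.val = 0 then {⟨0, by omega⟩}
    else {⟨2 * i.val - 1, by have := i.isLt; omega⟩, ⟨2 * i.val, by have := i.isLt; omega⟩}

/-- The graph `H_{2n+1}`. -/
def H2n1 (n : ℕ) : SimpleGraph (Fin (2 * n + 1) ⊕ Fin (n + 1) × Fin 2) :=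
  cliqueCoverConstruction (SimpleGraph.pathGraph (2 * n + 1)) (oddCover n)

/-!
A set `S` dominates the clique cover construction `C{G}` iff, for every clique `C i`, either `S`
meets `C i` or `S` contains both pendant vertices attached to `C i`: the pendants see only `C i`,
and a vertex of `C i` sees the rest of its clique and the pendants. This condition is local to the
blocks `C i ∪ {pᵢ, qᵢ}`, so when the cliques partition `V` the domination polynomial factors over
the blocks. A block contributes all its subsets except `∅`, `{pᵢ}`, `{qᵢ}`, i.e.
`(1 + x) ^ (|C i| + 2) - 2x - 1`. The path `P_{2n+1}` is covered by one clique of size `1` and `n`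
cliques of size `2`, giving `(x³ + 3x² + x)(x⁴ + 4x³ + 6x² + 2x)ⁿ`.
-/

open Finset

theorem Finset.sum_prod_filter_fiber {α ι R : Type*} [Fintype α] [DecidableEq α] [Fintype ι]
    [DecidableEq ι] [CommSemiring R] (f : α → ι) (g : ι → Finset α → R) :
    ∑ s : Finset α, ∏ i, g i {a ∈ s | f a = i} =
      ∏ i, ∑ t ∈ ({a | f a = i} : Finset α).powerset, g i t := by
  rw [prod_univ_sum]
  refine sum_nbij' (fun s i => {a ∈ s | f a = i}) (fun t => ({a | a ∈ t (f a)} : Finset α))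
    (fun s _ => ?_) (fun _ _ => mem_univ _) (fun s _ => ?_) (fun t ht => ?_) (fun _ _ => rfl)
  · simp only [Fintype.mem_piFinset, mem_powerset]
    exact fun i => filter_subset_filter _ (subset_univ s)
  · ext a; simp
  · simp only [Fintype.mem_piFinset, mem_powerset] at ht
    funext i; ext a
    simp only [mem_filter, mem_univ, true_and]
    constructor
    · rintro ⟨ha, rfl⟩; exact ha
    · intro ha; obtain ⟨-, rfl⟩ := mem_filter.1 (ht i ha); exact ⟨ha, rfl⟩

namespace cliqueCoverConstruction

variable {k : ℕ}

def BlockDominated (c : Finset V) (i : Fin k) (S : Finset (V ⊕ Fin k × Fin 2)) : Prop :=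
  (∃ v ∈ c, Sum.inl v ∈ S) ∨ (Sum.inr (i, 0) ∈ S ∧ Sum.inr (i, 1) ∈ S)

instance [DecidableEq V] (c : Finset V) (i : Fin k) : DecidablePred (BlockDominated c i) :=
  fun _ => inferInstanceAs (Decidable (_ ∨ _))

theorem dominates_iff {G : SimpleGraph V} {C : Fin k → Finset V} (hC : ∀ i, G.IsClique (C i))
    (hcover : ∀ v, ∃ i, v ∈ C i) (S : Finset (V ⊕ Fin k × Fin 2)) :
    Dominates (cliqueCoverConstruction G C) S ↔ ∀ i, BlockDominated (C i) i S := by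
  constructor
  · intro hS i
    by_contra h
    simp only [BlockDominated, not_or, not_exists, not_and] at h
    obtain ⟨t, ht⟩ : ∃ t, Sum.inr (i, t) ∉ S := by
      by_cases h0 : Sum.inr (i, 0) ∈ S
      exacts [⟨1, h.2 h0⟩, ⟨0, h0⟩]
    obtain ⟨(v | _), hvS, hv⟩ := hS _ ht
    exacts [h.1 v hv hvS, hv]
  · rintro h (v | ⟨i, t⟩) hx
    · obtain ⟨i, hv⟩ := hcover v
      rcases h i with ⟨u, hu, huS⟩ | ⟨h0, -⟩
      · exact ⟨_, huS, hC i hu hv fun huv => hx (huv ▸ huS)⟩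
      · exact ⟨_, h0, hv⟩
    · rcases h i with ⟨u, hu, huS⟩ | ⟨h0, h1⟩
      · exact ⟨_, huS, hu⟩
      · fin_cases t <;> contradiction

theorem sum_powerset_blockDominated {R : Type*} [CommRing R] [DecidableEq V] (x : R)
    (c : Finset V) (i : Fin k) :
    ∑ t ∈ (c.disjSum ({i} ×ˢ univ)).powerset with BlockDominated c i t, x ^ #t =
      (1 + x) ^ (#c + 2) - 2 * x - 1 := by
  set F := c.disjSum ({i} ×ˢ (univ : Finset (Fin 2)))
  set P : Finset (V ⊕ Fin k × Fin 2) := {Sum.inr (i, 0), Sum.inr (i, 1)}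
  have sum_powerset (s : Finset (V ⊕ Fin k × Fin 2)) : ∑ t ∈ s.powerset, x ^ #t = (1 + x) ^ #s := by
    simpa [add_comm] using sum_pow_mul_eq_add_pow x 1 s
  have undominated_eq : {t ∈ F.powerset | ¬BlockDominated c i t} = P.powerset.erase P := by
    ext t
    rw [mem_filter, mem_powerset, mem_erase, mem_powerset]
    constructor
    · rintro ⟨htF, hnot⟩
      simp only [BlockDominated, not_or, not_exists, not_and] at hnot
      have htP : t ⊆ P := by
        rintro (v | ⟨j, s⟩) hy
        · exact absurd hy (hnot.1 v (by simpa [F] using htF hy))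
        · obtain rfl : i = j := by simpa [F] using htF hy
          fin_cases s <;> simp [P]
      refine ⟨fun htP' => hnot.2 ?_ ?_, htP⟩ <;> simp [htP', P]
    · rintro ⟨hne, htP⟩
      refine ⟨htP.trans (by simp [P, F, insert_subset_iff]), ?_⟩
      rintro (⟨v, -, hv⟩ | ⟨h0, h1⟩)
      · simpa [P] using htP hv
      · exact hne (htP.antisymm (by simp [P, insert_subset_iff, h0, h1]))
  have hF : #F = #c + 2 := by simp [F]
  have hP : #P = 2 := by simp [P]
  have hsplit := sum_filter_add_sum_filter_not F.powerset (BlockDominated c i) (x ^ #·)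
  rw [sum_powerset, undominated_eq, sum_erase_eq_sub (mem_powerset_self P), sum_powerset, hF, hP] at hsplit
  linear_combination hsplit

theorem domPoly_eq_prod [Fintype V] {G : SimpleGraph V} {C : Fin k → Finset V}
    (hC : ∀ i, G.IsClique (C i)) (hpart : ∀ v, ∃! i, v ∈ C i) :
    domPoly (cliqueCoverConstruction G C) = ∏ i, ((1 + X) ^ (#(C i) + 2) - 2 * X - 1) := by
  classical
  choose f hf hf_unique using hpart
  let block : V ⊕ Fin k × Fin 2 → Fin k := Sum.elim f Prod.fst
  have block_fiber (i : Fin k) : ({y | block y = i} : Finset _) = (C i).disjSum ({i} ×ˢ univ) := by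
    ext (v | ⟨j, s⟩)
    · simpa [block] using ⟨fun h => h ▸ hf v, fun h => (hf_unique v i h).symm⟩
    · simp [block, eq_comm]
  have blockDominated_filter (i : Fin k) (S : Finset (V ⊕ Fin k × Fin 2)) :
      BlockDominated (C i) i {y ∈ S | block y = i} ↔ BlockDominated (C i) i S := by
    simp only [BlockDominated, mem_filter, block, Sum.elim_inl, Sum.elim_inr]
    grind
  have term_eq (S : Finset (V ⊕ Fin k × Fin 2)) :
      (if Dominates (cliqueCoverConstruction G C) S then X ^ #S else 0) =
        ∏ i, if BlockDominated (C i) i {y ∈ S | block y = i}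
          then (X : ℤ[X]) ^ #{y ∈ S | block y = i} else 0 := by
    simp only [prod_ite_zero, blockDominated_filter, mem_univ, true_implies,
      dominates_iff hC fun v => ⟨f v, hf v⟩, prod_pow_eq_pow_sum,
      ← card_eq_sum_card_fiberwise fun y _ => mem_univ (block y)]
  rw [domPoly, sum_congr rfl fun S _ => term_eq S,
    sum_prod_filter_fiber block fun i t => if BlockDominated (C i) i t then X ^ #t else 0]
  refine prod_congr rfl fun i _ => ?_
  rw [← sum_filter, block_fiber, sum_powerset_blockDominated]

end cliqueCoverConstruction

theorem mem_oddCover_iff {n : ℕ} {i : Fin (n + 1)} {a : Fin (2 * n + 1)} :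
    a ∈ oddCover n i ↔ (i : ℕ) = (a + 1) / 2 := by
  unfold oddCover
  split_ifs with h
  · rw [mem_singleton, Fin.ext_iff]; simp only; omega
  · rw [mem_insert, mem_singleton, Fin.ext_iff, Fin.ext_iff]; simp only; omega

theorem existsUnique_mem_oddCover (n : ℕ) (a : Fin (2 * n + 1)) : ∃! i, a ∈ oddCover n i :=
  ⟨⟨(a + 1) / 2, by omega⟩, mem_oddCover_iff.2 rfl, fun _ hi => Fin.ext (mem_oddCover_iff.1 hi)⟩

theorem oddCover_isClique (n : ℕ) (i : Fin (n + 1)) :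
    (SimpleGraph.pathGraph (2 * n + 1)).IsClique (oddCover n i) := by
  unfold oddCover
  split_ifs
  · simp
  · rw [coe_pair, SimpleGraph.isClique_pair]
    exact fun _ => SimpleGraph.pathGraph_adj.2 (Or.inl (by simp only; omega))

theorem card_oddCover_zero (n : ℕ) : #(oddCover n 0) = 1 := rfl

theorem card_oddCover_succ {n : ℕ} (i : Fin n) : #(oddCover n i.succ) = 2 := by
  rw [oddCover, if_neg (by simp), card_pair]
  simp only [ne_eq, Fin.mk.injEq, Fin.val_succ]
  omega

theorem domPoly_H2n1_general (n : ℕ) :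
    domPoly (H2n1 n) =
      (X ^ 3 + 3 * X ^ 2 + X) * (X ^ 4 + 4 * X ^ 3 + 6 * X ^ 2 + 2 * X) ^ n := by
  rw [H2n1, cliqueCoverConstruction.domPoly_eq_prod (oddCover_isClique n)
    (existsUnique_mem_oddCover n), Fin.prod_univ_succ]
  simp only [card_oddCover_zero, card_oddCover_succ, prod_const, card_univ, Fintype.card_fin]
  ring

/-- The domination polynomial of `H_{2n+1}`. -/
theorem domPoly_H2n1 (n : ℕ) (hn : 1 ≤ n) :
    domPoly (H2n1 n) =
      (X ^ 3 + 3 * X ^ 2 + X) * (X ^ 4 + 4 * X ^ 3 + 6 * X ^ 2 + 2 * X) ^ n :=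
  domPoly_H2n1_general n
end

section
/- For every finite simple graph G of order n ≥ 1, the graphs G ∘ P₃ and H_{2n} have the same domination polynomial, namely D(G ∘ P₃, x) = (x⁴ + 4x³ + 6x² + 2x)^n = D(H_{2n}, x). -/
open Polynomial

variable {V W : Type*}

/-- The corona `G ∘ H`. -/
def corona (G : SimpleGraph V) (H : SimpleGraph W) : SimpleGraph (V ⊕ V × W) where
  Adj x y :=
    match x, y with
    | Sum.inl a, Sum.inl b => G.Adj a b
    | Sum.inl a, Sum.inr (b, _) => a = b
    | Sum.inr (b, _), Sum.inl a => a = b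
    | Sum.inr (a, w), Sum.inr (b, w') => a = b ∧ H.Adj w w'
  symm := by
    constructor
    rintro (a | ⟨a, w⟩) (b | ⟨b, w'⟩) h
    · exact G.adj_symm h
    · exact h
    · exact h
    · exact ⟨h.1.symm, H.adj_symm h.2⟩
  loopless := by
    constructor
    rintro (a | ⟨a, w⟩) h
    · exact G.irrefl h
    · exact H.irrefl h.2

/-- clique cover of the even path -/
def evenCover (n : ℕ) : Fin n → Finset (Fin (2 * n)) :=
  fun i => {⟨2 * i.val, by have := i.isLt; omega⟩, ⟨2 * i.val + 1, by have := i.isLt; omega⟩}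

/-- The graph `H_{2n}`. -/
def H2n (n : ℕ) : SimpleGraph (Fin (2 * n) ⊕ Fin n × Fin 2) :=
  cliqueCoverConstruction (SimpleGraph.pathGraph (2 * n)) (evenCover n)

/-! Both graphs split into `n` disjoint blocks of four vertices, each inducing `K₄` minus an
edge: in `G ∘ P₃` a vertex of `G` with its copy of `P₃`, in `H_{2n}` the pair `v_{2i-1} v_{2i}`
with its two added vertices. Every edge leaving a block starts at a vertex adjacent to the rest
of its block, and every block has a vertex with no edge leaving it. Hence a set dominates the
graph iff it meets every block in a dominating set of the block, and the domination polynomial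
is `D(K₄ - e, x)ⁿ = (x⁴ + 4x³ + 6x² + 2x)ⁿ`. -/

open Finset SimpleGraph

theorem domPoly_eq_sum_filter [Fintype V] (G : SimpleGraph V) [DecidablePred (Dominates G)] :
    domPoly G = ∑ S with Dominates G S, X ^ #S := by
  rw [domPoly, sum_filter]
  congr!

theorem Dominates.map_iso {G : SimpleGraph V} {H : SimpleGraph W} (φ : G ≃g H) {S : Finset V}
    (hS : Dominates G S) : Dominates H (S.map φ.toEquiv.toEmbedding) := by
  intro w hw
  obtain ⟨u, hu, hadj⟩ := hS (φ.symm w) fun h => hw (mem_map_equiv.2 h)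
  exact ⟨φ u, mem_map_of_mem _ hu, by simpa using φ.map_adj_iff.2 hadj⟩

theorem dominates_map_iso_iff {G : SimpleGraph V} {H : SimpleGraph W} (φ : G ≃g H)
    (S : Finset V) : Dominates H (S.map φ.toEquiv.toEmbedding) ↔ Dominates G S :=
  ⟨fun h => by simpa [Finset.map_map] using h.map_iso φ.symm, Dominates.map_iso φ⟩

theorem domPoly_congr [Fintype V] [Fintype W] {G : SimpleGraph V} {H : SimpleGraph W}
    (φ : G ≃g H) : domPoly G = domPoly H := by
  classical
  simp only [domPoly_eq_sum_filter]
  exact sum_equiv (Equiv.finsetCongr φ.toEquiv) (by simp [dominates_map_iso_iff]) (by simp)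

theorem domPoly_eq_sum_range [Fintype V] (G : SimpleGraph V) [DecidablePred (Dominates G)]
    (c : ℕ → ℕ)
    (hc : ∀ k ≤ Fintype.card V, #{S : Finset V | Dominates G S ∧ #S = k} = c k) :
    domPoly G = ∑ k ∈ range (Fintype.card V + 1), (c k : ℤ[X]) * X ^ k := by
  have hcard : ∀ S ∈ ({S | Dominates G S} : Finset (Finset V)),
      #S ∈ range (Fintype.card V + 1) := fun S _ => mem_range_succ_iff.2 (card_le_univ S)
  rw [domPoly_eq_sum_filter, ← sum_fiberwise_of_maps_to hcard]
  refine sum_congr rfl fun k hk => ?_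
  rw [filter_filter, sum_congr rfl fun S hS => by rw [(mem_filter.1 hS).2.2], sum_const,
    nsmul_eq_mul, hc k (mem_range_succ_iff.1 hk)]

section Blocks

variable {ι T : Type*} [Fintype ι] [Fintype T] [DecidableEq ι] [DecidableEq T]

def Finset.curryEquiv : Finset (ι × T) ≃ (ι → Finset T) where
  toFun S i := {t | (i, t) ∈ S}
  invFun f := {p | p.2 ∈ f p.1}
  left_inv S := by ext; simp
  right_inv f := by ext; simp

@[simp] theorem Finset.mem_curryEquiv {S : Finset (ι × T)} {i : ι} {t : T} :
    t ∈ curryEquiv S i ↔ (i, t) ∈ S := by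
  simp [curryEquiv]

theorem Finset.card_curryEquiv_symm (f : ι → Finset T) :
    #(curryEquiv.symm f) = ∑ i, #(f i) := by
  simp only [curryEquiv, Equiv.coe_fn_symm_mk, card_filter, Fintype.sum_prod_type]
  simp

open Classical in
theorem domPoly_eq_pow_of_dominates_iff (K : SimpleGraph (ι × T)) (B : SimpleGraph T)
    (h : ∀ S, Dominates K S ↔ ∀ i, Dominates B (curryEquiv S i)) :
    domPoly K = domPoly B ^ Fintype.card ι := by
  calc domPoly K
      = ∑ f : ι → Finset T, if ∀ i, Dominates B (f i) then X ^ ∑ i, #(f i) else 0 := by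
        rw [domPoly]
        refine Fintype.sum_equiv curryEquiv _ _ fun S => ?_
        rw [← card_curryEquiv_symm, Equiv.symm_apply_apply]
        exact if_congr (h S) rfl rfl
    _ = ∑ f : ι → Finset T, ∏ i, if Dominates B (f i) then X ^ #(f i) else 0 := by
        simp only [Fintype.prod_ite_zero, prod_pow_eq_pow_sum]
    _ = ∏ _i : ι, domPoly B := by rw [domPoly, Fintype.prod_sum]
    _ = domPoly B ^ Fintype.card ι := by rw [prod_const, card_univ]

theorem dominates_iff_forall_block (K : SimpleGraph (ι × T)) (B : SimpleGraph T)
    (hblock : ∀ i s t, K.Adj (i, s) (i, t) ↔ B.Adj s t)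
    (hcross : ∀ i j s t, j ≠ i → K.Adj (j, t) (i, s) → ∀ s', s' ≠ s → B.Adj s' s)
    (hprivate : ∃ t₀, ∀ i j t, K.Adj (j, t) (i, t₀) → j = i) (S : Finset (ι × T)) :
    Dominates K S ↔ ∀ i, Dominates B (curryEquiv S i) := by
  constructor
  · intro hS i
    have hmeets : ∃ s, (i, s) ∈ S := by
      obtain ⟨t₀, ht₀⟩ := hprivate
      by_cases h : (i, t₀) ∈ S
      · exact ⟨t₀, h⟩
      obtain ⟨⟨j, u⟩, hu, hadj⟩ := hS _ h
      obtain rfl := ht₀ _ _ _ hadj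
      exact ⟨u, hu⟩
    intro t ht
    rw [mem_curryEquiv] at ht
    obtain ⟨⟨j, u⟩, hu, hadj⟩ := hS _ ht
    by_cases hji : j = i
    · subst hji
      exact ⟨u, mem_curryEquiv.2 hu, (hblock _ _ _).1 hadj⟩
    · obtain ⟨s, hs⟩ := hmeets
      exact ⟨s, mem_curryEquiv.2 hs, hcross _ _ _ _ hji hadj s (by rintro rfl; exact ht hs)⟩
  · rintro hS ⟨i, t⟩ ht
    obtain ⟨s, hs, hadj⟩ := hS i t (mem_curryEquiv.not.2 ht)
    exact ⟨(i, s), mem_curryEquiv.1 hs, (hblock _ _ _).2 hadj⟩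

end Blocks

def SimpleGraph.join (G : SimpleGraph V) (H : SimpleGraph W) : SimpleGraph (V ⊕ W) where
  Adj
    | .inl a, .inl b => G.Adj a b
    | .inr a, .inr b => H.Adj a b
    | .inl _, .inr _ => True
    | .inr _, .inl _ => True
  symm := by
    constructor
    rintro (a | a) (b | b) h
    exacts [h.symm, trivial, trivial, h.symm]
  loopless := by
    constructor
    rintro (a | a) h
    exacts [G.loopless.irrefl a h, H.loopless.irrefl a h]

def coronaBlockEquiv : V ⊕ V × W ≃ V × (Unit ⊕ W) :=
  ((Equiv.prodPUnit V).symm.sumCongr (Equiv.refl _)).trans (Equiv.prodSumDistrib V Unit W).symm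

theorem domPoly_corona [Fintype V] [Fintype W] [Nonempty W] (G : SimpleGraph V)
    (H : SimpleGraph W) :
    domPoly (corona G H) = domPoly ((⊥ : SimpleGraph Unit).join H) ^ Fintype.card V := by
  classical
  set K := (corona G H).comap coronaBlockEquiv.symm
  have hblock : ∀ v s t, K.Adj (v, s) (v, t) ↔ ((⊥ : SimpleGraph Unit).join H).Adj s t := by
    rintro v (_ | s) (_ | t) <;> simp [K, coronaBlockEquiv, corona, join]
  have hleaf : ∀ u v t w, K.Adj (v, t) (u, .inr w) → v = u := by
    rintro u v (_ | t) w hadj <;> simp_all [K, coronaBlockEquiv, corona]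
  have hcross : ∀ u v s t, v ≠ u → K.Adj (v, t) (u, s) →
      ∀ s', s' ≠ s → ((⊥ : SimpleGraph Unit).join H).Adj s' s := by
    rintro u v (_ | s) t hvu hadj (_ | s') hs'
    · exact absurd rfl hs'
    · trivial
    all_goals exact absurd (hleaf _ _ _ _ hadj) hvu
  obtain ⟨w⟩ := ‹Nonempty W›
  rw [← domPoly_congr (Iso.comap coronaBlockEquiv.symm (corona G H))]
  exact domPoly_eq_pow_of_dominates_iff _ _
    (dominates_iff_forall_block _ _ hblock hcross ⟨.inr w, fun u v t => hleaf u v t w⟩)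

theorem mem_evenCover {n : ℕ} {i : Fin n} {a : Fin (2 * n)} :
    a ∈ evenCover n i ↔ a.val / 2 = i.val := by
  simp only [evenCover, mem_insert, mem_singleton, Fin.ext_iff]
  omega

def h2nBlockEquiv (n : ℕ) : Fin (2 * n) ⊕ Fin n × Fin 2 ≃ Fin n × (Fin 2 ⊕ Fin 2) :=
  (((finCongr (Nat.mul_comm 2 n)).trans finProdFinEquiv.symm).sumCongr (Equiv.refl _)).trans
    (Equiv.prodSumDistrib _ _ _).symm

theorem domPoly_H2n (n : ℕ) :
    domPoly (H2n n) =
      domPoly ((⊤ : SimpleGraph (Fin 2)).join (⊥ : SimpleGraph (Fin 2))) ^ n := by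
  set K := (H2n n).comap (h2nBlockEquiv n).symm
  set B := (⊤ : SimpleGraph (Fin 2)).join (⊥ : SimpleGraph (Fin 2))
  have hblock : ∀ i s t, K.Adj (i, s) (i, t) ↔ B.Adj s t := by
    rintro i (s | s) (t | t) <;>
      simp [K, B, h2nBlockEquiv, H2n, cliqueCoverConstruction, join, mem_evenCover,
        pathGraph_adj, Fin.ext_iff] <;>
      omega
  have hpendant : ∀ i j t u, K.Adj (j, t) (i, .inr u) → j = i := by
    rintro i j (t | t) u hadj <;>
      simp [K, h2nBlockEquiv, H2n, cliqueCoverConstruction, mem_evenCover] at hadj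
    omega
  have hcross :
      ∀ i j s t, j ≠ i → K.Adj (j, t) (i, s) → ∀ s', s' ≠ s → B.Adj s' s := by
    rintro i j (s | s) t hji hadj (s' | s') hs'
    · exact (top_adj _ _).2 fun h => hs' (congrArg _ h)
    · trivial
    all_goals exact absurd (hpendant _ _ _ _ hadj) hji
  have := domPoly_eq_pow_of_dominates_iff _ _
    (dominates_iff_forall_block _ _ hblock hcross ⟨.inr 0, fun i j t => hpendant i j t 0⟩)
  rwa [domPoly_congr (Iso.comap (h2nBlockEquiv n).symm (H2n n)), Fintype.card_fin] at this

-- Only from here on: the general lemmas above must use classical decidability, as `domPoly` does.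
instance Dominates.decidablePred [Fintype V] [DecidableEq V] (G : SimpleGraph V)
    [DecidableRel G.Adj] : DecidablePred (Dominates G) := fun S => by
  unfold Dominates; infer_instance

instance SimpleGraph.join.adjDecidable (G : SimpleGraph V) (H : SimpleGraph W)
    [DecidableRel G.Adj] [DecidableRel H.Adj] : DecidableRel (G.join H).Adj
  | .inl a, .inl b => inferInstanceAs (Decidable (G.Adj a b))
  | .inr a, .inr b => inferInstanceAs (Decidable (H.Adj a b))
  | .inl _, .inr _ => inferInstanceAs (Decidable True)
  | .inr _, .inl _ => inferInstanceAs (Decidable True)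

instance SimpleGraph.pathGraph.adjDecidable (n : ℕ) : DecidableRel (pathGraph n).Adj :=
  fun _ _ => decidable_of_iff' _ pathGraph_adj

theorem domPoly_join_bot_pathGraph_three :
    domPoly ((⊥ : SimpleGraph Unit).join (pathGraph 3)) =
      X ^ 4 + 4 * X ^ 3 + 6 * X ^ 2 + 2 * X := by
  rw [domPoly_eq_sum_range _ (fun k => [0, 2, 6, 4, 1].getD k 0) (by decide)]
  simp [sum_range_succ]
  ring

theorem domPoly_join_top_bot :
    domPoly ((⊤ : SimpleGraph (Fin 2)).join (⊥ : SimpleGraph (Fin 2))) =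
      X ^ 4 + 4 * X ^ 3 + 6 * X ^ 2 + 2 * X := by
  rw [domPoly_eq_sum_range _ (fun k => [0, 2, 6, 4, 1].getD k 0) (by decide)]
  simp [sum_range_succ]
  ring

theorem domPoly_corona_path3_general {V : Type*} [Fintype V] (G : SimpleGraph V) :
    domPoly (corona G (SimpleGraph.pathGraph 3)) =
        (X ^ 4 + 4 * X ^ 3 + 6 * X ^ 2 + 2 * X) ^ Fintype.card V ∧
      (X ^ 4 + 4 * X ^ 3 + 6 * X ^ 2 + 2 * X) ^ Fintype.card V =
        domPoly (H2n (Fintype.card V)) := by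
  rw [domPoly_corona, domPoly_join_bot_pathGraph_three, domPoly_H2n, domPoly_join_top_bot]
  exact ⟨rfl, rfl⟩

/-- `G ∘ P₃` and `H_{2n}` have the same domination polynomial, namely
`(x⁴+4x³+6x²+2x)ⁿ`, where `n = |V(G)| ≥ 1`. -/
theorem domPoly_corona_path3 {V : Type*} [Fintype V] (G : SimpleGraph V)
    (hn : 1 ≤ Fintype.card V) :
    domPoly (corona G (SimpleGraph.pathGraph 3)) =
        (X ^ 4 + 4 * X ^ 3 + 6 * X ^ 2 + 2 * X) ^ Fintype.card V ∧
      (X ^ 4 + 4 * X ^ 3 + 6 * X ^ 2 + 2 * X) ^ Fintype.card V =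
        domPoly (H2n (Fintype.card V)) :=
  domPoly_corona_path3_general G
end
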